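/- (Lemma 3.1: vanishing of the A-type Jackson integral on the diagonal.) Suppose τ is not a positive integer. Let x=(x₁,…,xₙ)∈(ℂ∖{0})ⁿ be such that the bilateral series defining I(x) converges absolutely and all summands Ψ_x(ν) are well-defined (no vanishing denominators), and suppose x_i = x_j for some 1≤i<j≤n, with the chosen branch values of the powers of x_i and x_j also equal. Then I(x₁,…,xₙ)=0. -/

import Mathlib

open scoped BigOperators

/-- `q^c := exp(c · log q)` with the real branch of `log q`. -/
noncomputable def qpow (q : ℝ) (c : ℂ) : ℂ := Complex.exp (c * (Real.log q : ℂ))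

/-- `(a)_∞ := ∏_{i=0}^∞ (1 - q^i a)`. -/
noncomputable def poch (q : ℝ) (a : ℂ) : ℂ := ∏' i : ℕ, (1 - (q : ℂ) ^ i * a)

/-- `θ(a) := (a)_∞ (q/a)_∞`. -/
noncomputable def qtheta (q : ℝ) (a : ℂ) : ℂ := poch q a * poch q ((q : ℂ) / a)

/-- The summand `Ψ_x(ν)` of the Jackson integral of A-type; the base point `x` is given
through branch logarithms `l` (so `x i = exp (l i)` and the branch `x i ^ c = exp (c * l i)`). -/
noncomputable def Apsi (q : ℝ) (n : ℕ) (α τ a₁ b₁ : ℂ) (l : Fin n → ℂ) (ν : Fin n → ℤ) : ℂ :=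
  (∏ i : Fin n,
      Complex.exp (α * l i) * qpow q α ^ ν i *
        (poch q ((q : ℂ) * a₁⁻¹ * (Complex.exp (l i) * (q : ℂ) ^ ν i)) /
          poch q (b₁ * (Complex.exp (l i) * (q : ℂ) ^ ν i)))) *
  (∏ i : Fin n, ∏ j ∈ Finset.Ioi i,
      Complex.exp ((2 * τ - 1) * l i) * qpow q (2 * τ - 1) ^ ν i *
        (poch q (qpow q (1 - τ) *
            (Complex.exp (l j) * (q : ℂ) ^ ν j / (Complex.exp (l i) * (q : ℂ) ^ ν i))) /
          poch q (qpow q τ *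
            (Complex.exp (l j) * (q : ℂ) ^ ν j / (Complex.exp (l i) * (q : ℂ) ^ ν i))))) *
  (∏ i : Fin n, ∏ j ∈ Finset.Ioi i,
      (Complex.exp (l i) * (q : ℂ) ^ ν i - Complex.exp (l j) * (q : ℂ) ^ ν j))

/-- The Jackson integral of A-type `I(x) = (1-q)^n Σ_{ν ∈ ℤⁿ} Ψ_x(ν)`. -/
noncomputable def AInt (q : ℝ) (n : ℕ) (α τ a₁ b₁ : ℂ) (l : Fin n → ℂ) : ℂ :=
  ((1 : ℂ) - (q : ℂ)) ^ n * ∑' ν : Fin n → ℤ, Apsi q n α τ a₁ b₁ l ν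

/-- All summands of `I(x)` are well defined: no vanishing denominators. -/
def AWellDef (q : ℝ) (n : ℕ) (τ b₁ : ℂ) (l : Fin n → ℂ) : Prop :=
  ∀ ν : Fin n → ℤ,
    (∀ i : Fin n, poch q (b₁ * (Complex.exp (l i) * (q : ℂ) ^ ν i)) ≠ 0) ∧
    (∀ i j : Fin n, i < j →
      poch q (qpow q τ *
        (Complex.exp (l j) * (q : ℂ) ^ ν j / (Complex.exp (l i) * (q : ℂ) ^ ν i))) ≠ 0)

/-!
Let `σ` be the transposition of `i` and `j`. Since `x_i = x_j`, branches included, `Ψ_x(ν ∘ σ)`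
is `Ψ` at the lattice point `x q^ν` with its coordinates `i` and `j` exchanged. We show that this
exchange changes the sign of `Ψ`; reindexing the sum by `ν ↦ ν ∘ σ` then gives `I(x) = -I(x)`.

The one-variable factors are symmetric and the difference product changes sign. The pair weight
`x_a^{2τ-1} (q^{1-τ} x_b/x_a)_∞ / (q^τ x_b/x_a)_∞` is not symmetric, but as `x_j/x_i ∈ q^ℤ` the
weights of the pair `(i, j)` and of the two pairs `(i, b)`, `(b, j)` with `i < b < j` are
preserved: shifting `y` by `q^m` in `(u y)_∞ / (v y)_∞`, where `u = q^{1-τ}` and `v = q^τ`, splits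
off finite products, and since `u v = q` these cancel against each other.
-/

lemma multipliable_poch {q : ℝ} (hq : |q| < 1) (a : ℂ) :
    Multipliable fun i : ℕ => 1 - (q : ℂ) ^ i * a := by
  have hgeom : Summable fun i : ℕ => (q : ℂ) ^ i :=
    summable_geometric_of_norm_lt_one (by rwa [Complex.norm_real, Real.norm_eq_abs])
  convert Complex.multipliable_one_add_of_summable (hgeom.mul_right a).neg using 2
  ring

def finPoch {R : Type*} [CommRing R] (q a : R) (m : ℕ) : R :=
  ∏ k ∈ Finset.range m, (1 - q ^ k * a)

lemma poch_eq_finPoch_mul {q : ℝ} (hq : |q| < 1) (m : ℕ) (a : ℂ) :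
    poch q a = finPoch (q : ℂ) a m * poch q ((q : ℂ) ^ m * a) := by
  have hshift : ∀ i : ℕ, 1 - (q : ℂ) ^ i * ((q : ℂ) ^ m * a) = 1 - (q : ℂ) ^ (i + m) * a := by
    intro i; rw [pow_add]; ring
  have h := multipliable_poch hq ((q : ℂ) ^ m * a)
  simp only [hshift] at h
  rw [poch, poch, ← Multipliable.prod_mul_tprod_nat_mul' (f := fun i => 1 - (q : ℂ) ^ i * a) h]
  simp only [hshift, finPoch]

lemma finPoch_ne_zero_of_poch_ne_zero {q : ℝ} (hq : |q| < 1) (m : ℕ) {a : ℂ}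
    (h : poch q a ≠ 0) : finPoch (q : ℂ) a m ≠ 0 := by
  rw [poch_eq_finPoch_mul hq m] at h
  exact left_ne_zero_of_mul h

lemma pow_mul_finPoch_mul_finPoch_eq {R : Type*} [CommRing R] {q u v y y' : R} {m : ℕ}
    (huv : u * v = q) (hy : q ^ m * y * y' = 1) :
    v ^ m * finPoch q (u * y) m * finPoch q (u * y') m
      = u ^ m * finPoch q (v * y) m * finPoch q (v * y') m := by
  -- the factor `k` of the first product is paired with the factor `m - 1 - k` of the second
  have hfactor : ∀ k ∈ Finset.range m,
      v * (1 - q ^ k * (u * y)) * (1 - q ^ (m - 1 - k) * (u * y'))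
        = u * (1 - q ^ k * (v * y)) * (1 - q ^ (m - 1 - k) * (v * y')) := by
    intro k hk
    have hpow : q ^ k * q ^ (m - 1 - k) * q = q ^ m := by
      rw [← pow_add, ← pow_succ]
      congr 1
      have := Finset.mem_range.mp hk
      omega
    linear_combination (u - v) * (q ^ k * q ^ (m - 1 - k) * y * y') * huv
      + (u - v) * y * y' * hpow + (u - v) * hy
  have hcombine : ∀ c d : R, c ^ m * finPoch q (d * y) m * finPoch q (d * y') m
      = ∏ k ∈ Finset.range m, c * (1 - q ^ k * (d * y)) * (1 - q ^ (m - 1 - k) * (d * y')) := by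
    intro c d
    rw [Finset.prod_mul_distrib, Finset.prod_mul_distrib, Finset.prod_const, Finset.card_range,
      finPoch, finPoch, ← Finset.prod_range_reflect (fun k => 1 - q ^ k * (d * y'))]
  rw [hcombine, hcombine, Finset.prod_congr rfl hfactor]

lemma qpow_add (q : ℝ) (c d : ℂ) : qpow q (c + d) = qpow q c * qpow q d := by
  simp only [qpow, add_mul, Complex.exp_add]

lemma qpow_ne_zero (q : ℝ) (c : ℂ) : qpow q c ≠ 0 := Complex.exp_ne_zero _

lemma qpow_one {q : ℝ} (hq : 0 < q) : qpow q 1 = q := by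
  rw [qpow, one_mul, ← Complex.ofReal_exp, Real.exp_log hq]

lemma qpow_one_sub_mul_qpow {q : ℝ} (hq : 0 < q) (τ : ℂ) : qpow q (1 - τ) * qpow q τ = q := by
  rw [← qpow_add, sub_add_cancel, qpow_one hq]

lemma qpow_two_mul_sub_one_mul_qpow_one_sub (q : ℝ) (τ : ℂ) :
    qpow q (2 * τ - 1) * qpow q (1 - τ) = qpow q τ := by
  rw [← qpow_add]; ring_nf

lemma exp_mul_add_int_mul_log (q : ℝ) (c x : ℂ) (m : ℤ) :
    Complex.exp (c * (x + m * Real.log q)) = qpow q c ^ m * Complex.exp (c * x) := by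
  rw [qpow, ← Complex.exp_int_mul, ← Complex.exp_add]
  ring_nf

lemma exp_add_int_mul_log {q : ℝ} (hq : 0 < q) (x : ℂ) (m : ℤ) :
    Complex.exp (x + m * Real.log q) = (q : ℂ) ^ m * Complex.exp x := by
  simpa [qpow_one hq] using exp_mul_add_int_mul_log q 1 x m

noncomputable def pairRatio (q : ℝ) (τ w : ℂ) : ℂ :=
  poch q (qpow q (1 - τ) * w) / poch q (qpow q τ * w)

section PairRatio

variable {q : ℝ} {τ : ℂ}

lemma pairRatio_eq_finPoch_div_mul (hq : |q| < 1) (m : ℕ) (y : ℂ) :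
    pairRatio q τ y = finPoch (q : ℂ) (qpow q (1 - τ) * y) m / finPoch (q : ℂ) (qpow q τ * y) m
      * pairRatio q τ ((q : ℂ) ^ m * y) := by
  rw [pairRatio, pairRatio, poch_eq_finPoch_mul hq m, poch_eq_finPoch_mul hq m (_ * y),
    mul_left_comm _ _ y, mul_left_comm _ (qpow q τ), mul_div_mul_comm]

lemma qpow_pow_mul_finPoch_mul_finPoch (hq : 0 < q) (m : ℕ) {y y' : ℂ}
    (hyy' : (q : ℂ) ^ m * y * y' = 1) :
    qpow q (2 * τ - 1) ^ m * finPoch (q : ℂ) (qpow q (1 - τ) * y) m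
        * finPoch (q : ℂ) (qpow q (1 - τ) * y') m
      = finPoch (q : ℂ) (qpow q τ * y) m * finPoch (q : ℂ) (qpow q τ * y') m := by
  have hfin := pow_mul_finPoch_mul_finPoch_eq (qpow_one_sub_mul_qpow hq τ) hyy'
  have hpow : qpow q (2 * τ - 1) ^ m * qpow q (1 - τ) ^ m = qpow q τ ^ m := by
    rw [← mul_pow, qpow_two_mul_sub_one_mul_qpow_one_sub]
  apply mul_left_cancel₀ (pow_ne_zero m (qpow_ne_zero q (1 - τ)))
  linear_combination hfin + finPoch (q : ℂ) (qpow q (1 - τ) * y) m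
    * finPoch (q : ℂ) (qpow q (1 - τ) * y') m * hpow

lemma qpow_pow_mul_pairRatio_mul_pairRatio (hq0 : 0 < q) (hq1 : q < 1) (m : ℕ) {y y' : ℂ}
    (hyy' : (q : ℂ) ^ m * y * y' = 1)
    (hy : poch q (qpow q τ * y) ≠ 0) (hy' : poch q (qpow q τ * y') ≠ 0) :
    qpow q (2 * τ - 1) ^ m * pairRatio q τ y * pairRatio q τ y'
      = pairRatio q τ ((q : ℂ) ^ m * y) * pairRatio q τ ((q : ℂ) ^ m * y') := by
  have hq : |q| < 1 := abs_lt.mpr ⟨by linarith, hq1⟩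
  have hC := finPoch_ne_zero_of_poch_ne_zero hq m hy
  have hC' := finPoch_ne_zero_of_poch_ne_zero hq m hy'
  rw [pairRatio_eq_finPoch_div_mul hq m y, pairRatio_eq_finPoch_div_mul hq m y']
  calc _ = qpow q (2 * τ - 1) ^ m * finPoch (q : ℂ) (qpow q (1 - τ) * y) m
          * finPoch (q : ℂ) (qpow q (1 - τ) * y') m
          / (finPoch (q : ℂ) (qpow q τ * y) m * finPoch (q : ℂ) (qpow q τ * y') m)
          * (pairRatio q τ ((q : ℂ) ^ m * y) * pairRatio q τ ((q : ℂ) ^ m * y')) := by ring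
    _ = _ := by
      rw [qpow_pow_mul_finPoch_mul_finPoch hq0 m hyy', div_self (mul_ne_zero hC hC'), one_mul]

/- Not a special case of the previous lemma: with `y' = q^m y` it would leave the factor
`pairRatio q τ (q^m y)` on both sides, and that factor may vanish. -/
lemma qpow_pow_mul_pairRatio_of_mul_eq_one (hq0 : 0 < q) (hq1 : q < 1) (m : ℕ) {y : ℂ}
    (hyy : (q : ℂ) ^ m * y * ((q : ℂ) ^ m * y) = 1) (hy : poch q (qpow q τ * y) ≠ 0) :
    qpow q (2 * τ - 1) ^ m * pairRatio q τ y = pairRatio q τ ((q : ℂ) ^ m * ((q : ℂ) ^ m * y)) := by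
  have hq : |q| < 1 := abs_lt.mpr ⟨by linarith, hq1⟩
  have hC := finPoch_ne_zero_of_poch_ne_zero hq m hy
  rw [poch_eq_finPoch_mul hq m, mul_left_comm] at hy
  have hC' := finPoch_ne_zero_of_poch_ne_zero hq m (right_ne_zero_of_mul hy)
  rw [pairRatio_eq_finPoch_div_mul hq m y, pairRatio_eq_finPoch_div_mul hq m ((q : ℂ) ^ m * y)]
  calc _ = qpow q (2 * τ - 1) ^ m * finPoch (q : ℂ) (qpow q (1 - τ) * y) m
          * finPoch (q : ℂ) (qpow q (1 - τ) * ((q : ℂ) ^ m * y)) m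
          / (finPoch (q : ℂ) (qpow q τ * y) m * finPoch (q : ℂ) (qpow q τ * ((q : ℂ) ^ m * y)) m)
          * pairRatio q τ ((q : ℂ) ^ m * ((q : ℂ) ^ m * y)) := by ring
    _ = _ := by
      rw [qpow_pow_mul_finPoch_mul_finPoch hq0 m hyy, div_self (mul_ne_zero hC hC'), one_mul]
lemma qpow_zpow_mul_pairRatio_mul_pairRatio (hq0 : 0 < q) (hq1 : q < 1) (m : ℤ) {y y' : ℂ}
    (hyy' : (q : ℂ) ^ m * y * y' = 1)
    (hy : ∀ k : ℤ, poch q (qpow q τ * ((q : ℂ) ^ k * y)) ≠ 0)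
    (hy' : ∀ k : ℤ, poch q (qpow q τ * ((q : ℂ) ^ k * y')) ≠ 0) :
    qpow q (2 * τ - 1) ^ m * pairRatio q τ y * pairRatio q τ y'
      = pairRatio q τ ((q : ℂ) ^ m * y) * pairRatio q τ ((q : ℂ) ^ m * y') := by
  have hq : (q : ℂ) ≠ 0 := Complex.ofReal_ne_zero.mpr hq0.ne'
  obtain ⟨k, rfl | rfl⟩ := Int.eq_nat_or_neg m
  · simp only [zpow_natCast] at hyy' ⊢
    simpa using qpow_pow_mul_pairRatio_mul_pairRatio hq0 hq1 k hyy' (by simpa using hy 0)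
      (by simpa using hy' 0)
  · have hshift : ∀ z : ℂ, (q : ℂ) ^ k * ((q : ℂ) ^ (-(k : ℤ)) * z) = z := fun z => by
      rw [← mul_assoc, ← zpow_natCast, ← zpow_add₀ hq, add_neg_cancel, zpow_zero, one_mul]
    have h := qpow_pow_mul_pairRatio_mul_pairRatio (τ := τ) hq0 hq1 k
      (y := (q : ℂ) ^ (-(k : ℤ)) * y) (y' := (q : ℂ) ^ (-(k : ℤ)) * y')
      (by rw [← mul_assoc, hshift, ← hyy']; ring) (hy _) (hy' _)
    rw [hshift, hshift] at h
    rw [mul_assoc, ← h, zpow_neg, zpow_natCast, ← mul_assoc, ← mul_assoc,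
      inv_mul_cancel₀ (pow_ne_zero k (qpow_ne_zero q _)), one_mul]

lemma qpow_zpow_mul_pairRatio_zpow_neg (hq0 : 0 < q) (hq1 : q < 1) (m : ℤ)
    (h : ∀ k : ℤ, poch q (qpow q τ * (q : ℂ) ^ k) ≠ 0) :
    qpow q (2 * τ - 1) ^ m * pairRatio q τ ((q : ℂ) ^ (-m)) = pairRatio q τ ((q : ℂ) ^ m) := by
  have hq : (q : ℂ) ≠ 0 := Complex.ofReal_ne_zero.mpr hq0.ne'
  have hnat : ∀ k : ℕ, qpow q (2 * τ - 1) ^ k * pairRatio q τ ((q : ℂ) ^ (-(k : ℤ)))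
      = pairRatio q τ ((q : ℂ) ^ k) := by
    intro k
    have hcancel : (q : ℂ) ^ k * (q : ℂ) ^ (-(k : ℤ)) = 1 := by
      rw [← zpow_natCast, ← zpow_add₀ hq, add_neg_cancel, zpow_zero]
    have h := qpow_pow_mul_pairRatio_of_mul_eq_one hq0 hq1 k (by rw [hcancel, one_mul]) (h _)
    rwa [hcancel, mul_one] at h
  obtain ⟨k, rfl | rfl⟩ := Int.eq_nat_or_neg m
  · simpa using hnat k
  · rw [neg_neg, zpow_natCast, ← hnat k, zpow_neg, zpow_natCast, ← mul_assoc,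
      inv_mul_cancel₀ (pow_ne_zero k (qpow_ne_zero q _)), one_mul]

end PairRatio

noncomputable def pairFactor (q : ℝ) (τ x y : ℂ) : ℂ :=
  Complex.exp ((2 * τ - 1) * x) * pairRatio q τ (Complex.exp (y - x))
    * (Complex.exp x - Complex.exp y)

section PairFactor

variable {q : ℝ} {τ : ℂ}

lemma pairFactor_add_int_mul_log_swap (hq0 : 0 < q) (hq1 : q < 1) (x : ℂ) (m : ℤ)
    (h : ∀ k : ℤ, poch q (qpow q τ * (q : ℂ) ^ k) ≠ 0) :
    pairFactor q τ (x + m * Real.log q) x = -pairFactor q τ x (x + m * Real.log q) := by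
  have hdiff : ∀ k : ℤ, Complex.exp (x + k * Real.log q - x) = (q : ℂ) ^ k := fun k => by
    simpa using exp_add_int_mul_log hq0 0 k
  have hdiff' : Complex.exp (x - (x + m * Real.log q)) = (q : ℂ) ^ (-m) := by
    rw [← hdiff (-m)]; push_cast; ring_nf
  have hK := qpow_zpow_mul_pairRatio_zpow_neg hq0 hq1 m h
  simp only [pairFactor, hdiff, hdiff', exp_mul_add_int_mul_log, exp_add_int_mul_log hq0]
  linear_combination (Complex.exp ((2 * τ - 1) * x)
    * ((q : ℂ) ^ m * Complex.exp x - Complex.exp x)) * hK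

lemma pairFactor_mul_pairFactor_add_int_mul_log (hq0 : 0 < q) (hq1 : q < 1) (x y : ℂ) (m : ℤ)
    (hxy : ∀ k : ℤ, poch q (qpow q τ * ((q : ℂ) ^ k * Complex.exp (y - x))) ≠ 0)
    (hyx : ∀ k : ℤ, poch q (qpow q τ * ((q : ℂ) ^ k * Complex.exp (x - y))) ≠ 0) :
    pairFactor q τ y x * pairFactor q τ (x + m * Real.log q) y
      = pairFactor q τ x y * pairFactor q τ y (x + m * Real.log q) := by
  have hq : (q : ℂ) ≠ 0 := Complex.ofReal_ne_zero.mpr hq0.ne'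
  have e1 : Complex.exp (y - (x + m * Real.log q)) = (q : ℂ) ^ (-m) * Complex.exp (y - x) := by
    rw [← exp_add_int_mul_log hq0]; push_cast; ring_nf
  have e2 : Complex.exp (x + m * Real.log q - y) = (q : ℂ) ^ m * Complex.exp (x - y) := by
    rw [← exp_add_int_mul_log hq0]; ring_nf
  have hprod : (q : ℂ) ^ m * ((q : ℂ) ^ (-m) * Complex.exp (y - x)) * Complex.exp (x - y) = 1 := by
    rw [← mul_assoc, ← zpow_add₀ hq, add_neg_cancel, zpow_zero, one_mul, ← Complex.exp_add]
    simp
  have hshift : (q : ℂ) ^ m * ((q : ℂ) ^ (-m) * Complex.exp (y - x)) = Complex.exp (y - x) := by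
    rw [← mul_assoc, ← zpow_add₀ hq, add_neg_cancel, zpow_zero, one_mul]
  have hK := qpow_zpow_mul_pairRatio_mul_pairRatio hq0 hq1 m hprod
    (fun k => by rw [← mul_assoc ((q : ℂ) ^ k), ← zpow_add₀ hq]; exact hxy _) hyx
  rw [hshift] at hK
  simp only [pairFactor, e1, e2, exp_mul_add_int_mul_log, exp_add_int_mul_log hq0]
  linear_combination (Complex.exp ((2 * τ - 1) * y) * Complex.exp ((2 * τ - 1) * x)
    * (Complex.exp y - Complex.exp x) * ((q : ℂ) ^ m * Complex.exp x - Complex.exp y)) * hK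

end PairFactor

section PairProducts

open Finset

variable {α M : Type*} [LinearOrder α] [Fintype α] [CommMonoid M]

lemma prod_Ioi_eq_prod_filter_lt [LocallyFiniteOrderTop α] (F : α → α → M) :
    ∏ a, ∏ b ∈ Ioi a, F a b = ∏ p : α × α with p.1 < p.2, F p.1 p.2 :=
  (prod_finset_product' _ _ _ (by simp)).symm

lemma prod_filter_lt_comp_perm (σ : Equiv.Perm α) (G : α → α → M) :
    ∏ p : α × α with p.1 < p.2, G (σ p.1) (σ p.2)
      = (∏ p : α × α with p.1 < p.2 ∧ σ.symm p.2 < σ.symm p.1, G p.2 p.1)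
        * ∏ p : α × α with p.1 < p.2 ∧ ¬σ.symm p.2 < σ.symm p.1, G p.1 p.2 := by
  let sort : α × α → α × α := fun p => if p.2 < p.1 then (p.2, p.1) else p
  have hsort : ∀ (ρ : Equiv.Perm α) (p : α × α), p.1 < p.2 →
      (sort (ρ p.1, ρ p.2)).1 < (sort (ρ p.1, ρ p.2)).2 ∧
        sort (ρ.symm (sort (ρ p.1, ρ p.2)).1, ρ.symm (sort (ρ p.1, ρ p.2)).2) = p := by
    intro ρ p hp
    by_cases h : ρ p.2 < ρ p.1
    · simp [sort, h, hp]
    · have h' : ρ p.1 < ρ p.2 := lt_of_le_of_ne (not_lt.mp h) (ρ.injective.ne hp.ne)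
      simp [sort, h, h', hp.not_gt]
  rw [← filter_filter, ← filter_filter, ← prod_ite]
  refine prod_nbij' (fun p => sort (σ p.1, σ p.2)) (fun p => sort (σ.symm p.1, σ.symm p.2))
    ?_ ?_ ?_ ?_ ?_
  · intro p hp
    simpa using (hsort σ p (by simpa using hp)).1
  · intro p hp
    simpa using (hsort σ.symm p (by simpa using hp)).1
  · intro p hp
    exact (hsort σ p (by simpa using hp)).2
  · intro p hp
    simpa using (hsort σ.symm p (by simpa using hp)).2
  · intro p hp
    have hp : p.1 < p.2 := by simpa using hp
    by_cases h : σ p.2 < σ p.1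
    · simp [sort, h, hp]
    · simp [sort, h, hp.not_gt]

lemma prod_filter_lt_swap_inversions [LocallyFiniteOrder α] {i j : α} (hij : i < j)
    (F : α × α → M) :
    ∏ p : α × α with p.1 < p.2 ∧ Equiv.swap i j p.2 < Equiv.swap i j p.1, F p
      = F (i, j) * ∏ b ∈ Ioo i j, F (i, b) * F (b, j) := by
  have hset : ({p : α × α | p.1 < p.2 ∧ Equiv.swap i j p.2 < Equiv.swap i j p.1} : Finset _)
      = (Ioc i j).image (fun b => (i, b)) ∪ (Ioo i j).image (fun b => (b, j)) := by
    ext ⟨a, b⟩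
    simp only [mem_union, mem_image, mem_Ioc, mem_Ioo, Prod.mk.injEq, Equiv.swap_apply_def]
    grind
  have hdisj :
      Disjoint ((Ioc i j).image (fun b => (i, b))) ((Ioo i j).image (fun b => (b, j))) := by
    simp only [disjoint_left, mem_image, mem_Ioc, mem_Ioo]
    grind
  rw [hset, prod_union hdisj, prod_image (by simp), prod_image (by simp), ← Ioo_insert_right hij,
    prod_insert (by simp), mul_assoc, prod_mul_distrib]

lemma prod_Ioi_comp_swap [LocallyFiniteOrder α] [LocallyFiniteOrderTop α] {i j : α} (hij : i < j)
    (G : α → α → M) (c : M) (hji : G j i = c * G i j)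
    (hmid : ∀ b ∈ Ioo i j, G b i * G j b = G i b * G b j) :
    ∏ a, ∏ b ∈ Ioi a, G (Equiv.swap i j a) (Equiv.swap i j b) = c * ∏ a, ∏ b ∈ Ioi a, G a b := by
  rw [prod_Ioi_eq_prod_filter_lt, prod_Ioi_eq_prod_filter_lt, prod_filter_lt_comp_perm,
    Equiv.symm_swap, prod_filter_lt_swap_inversions hij (fun p => G p.2 p.1)]
  conv_rhs => rw [← prod_filter_mul_prod_filter_not _
    (fun p : α × α => Equiv.swap i j p.2 < Equiv.swap i j p.1), filter_filter, filter_filter,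
    prod_filter_lt_swap_inversions hij (fun p => G p.1 p.2)]
  rw [hji, prod_congr rfl hmid, mul_assoc, mul_assoc, mul_assoc]

end PairProducts

noncomputable def siteFactor (q : ℝ) (α a₁ b₁ x : ℂ) : ℂ :=
  Complex.exp (α * x) * (poch q ((q : ℂ) * a₁⁻¹ * Complex.exp x) / poch q (b₁ * Complex.exp x))

/- `Ψ_x(ν)` as a function of the branch logarithms `L = log x + ν log q` of the lattice point
`x q^ν`. -/
noncomputable def jacksonSummand (q : ℝ) (n : ℕ) (α τ a₁ b₁ : ℂ) (L : Fin n → ℂ) : ℂ :=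
  (∏ k, siteFactor q α a₁ b₁ (L k)) * ∏ a, ∏ b ∈ Finset.Ioi a, pairFactor q τ (L a) (L b)

lemma Apsi_eq_jacksonSummand {q : ℝ} (hq : 0 < q) (n : ℕ) (α τ a₁ b₁ : ℂ) (l : Fin n → ℂ)
    (ν : Fin n → ℤ) :
    Apsi q n α τ a₁ b₁ l ν = jacksonSummand q n α τ a₁ b₁ (fun k => l k + ν k * Real.log q) := by
  have hX : ∀ k, Complex.exp (l k) * (q : ℂ) ^ ν k = Complex.exp (l k + ν k * Real.log q) :=
    fun k => by rw [exp_add_int_mul_log hq, mul_comm]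
  have hW : ∀ c k, Complex.exp (c * l k) * qpow q c ^ ν k
      = Complex.exp (c * (l k + ν k * Real.log q)) :=
    fun c k => by rw [exp_mul_add_int_mul_log, mul_comm]
  simp only [Apsi, jacksonSummand, siteFactor, pairFactor, pairRatio, hX, hW, ← Complex.exp_sub,
    ← Finset.prod_mul_distrib, mul_assoc]

lemma jacksonSummand_comp_swap {q : ℝ} (hq0 : 0 < q) (hq1 : q < 1) (n : ℕ) (α τ a₁ b₁ : ℂ)
    {L : Fin n → ℂ} {i j : Fin n} (hij : i < j) (m : ℤ) (hL : L j = L i + m * Real.log q)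
    (hL0 : ∀ a b : Fin n, a < b → ∀ k : ℤ,
      poch q (qpow q τ * ((q : ℂ) ^ k * Complex.exp (L b - L a))) ≠ 0) :
    jacksonSummand q n α τ a₁ b₁ (fun k => L (Equiv.swap i j k))
      = -jacksonSummand q n α τ a₁ b₁ L := by
  have hq : (q : ℂ) ≠ 0 := Complex.ofReal_ne_zero.mpr hq0.ne'
  have hshift : ∀ (x : ℂ) (k : ℤ), (q : ℂ) ^ (k - m) * Complex.exp (L i + m * Real.log q - x)
      = (q : ℂ) ^ k * Complex.exp (L i - x) := fun x k => by
    rw [add_sub_right_comm, exp_add_int_mul_log hq0, ← mul_assoc, ← zpow_add₀ hq, sub_add_cancel]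
  have hji : pairFactor q τ (L j) (L i) = -1 * pairFactor q τ (L i) (L j) := by
    rw [hL, neg_one_mul]
    refine pairFactor_add_int_mul_log_swap hq0 hq1 (L i) m fun k => ?_
    have h := hL0 i j hij (k - m)
    rwa [hL, hshift, sub_self, Complex.exp_zero, mul_one] at h
  have hmid : ∀ b ∈ Finset.Ioo i j, pairFactor q τ (L b) (L i) * pairFactor q τ (L j) (L b)
      = pairFactor q τ (L i) (L b) * pairFactor q τ (L b) (L j) := by
    intro b hb
    obtain ⟨hib, hbj⟩ := Finset.mem_Ioo.mp hb
    rw [hL]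
    refine pairFactor_mul_pairFactor_add_int_mul_log hq0 hq1 (L i) (L b) m (hL0 i b hib)
      fun k => ?_
    have h := hL0 b j hbj (k - m)
    rwa [hL, hshift] at h
  rw [jacksonSummand, jacksonSummand,
    Equiv.prod_comp (Equiv.swap i j) (fun k => siteFactor q α a₁ b₁ (L k)),
    prod_Ioi_comp_swap hij (fun a b => pairFactor q τ (L a) (L b)) (-1) hji hmid]
  ring

lemma AWellDef.poch_ne_zero {q : ℝ} (hq : 0 < q) {n : ℕ} {τ b₁ : ℂ} {l : Fin n → ℂ}
    (hwd : AWellDef q n τ b₁ l) (ν : Fin n → ℤ) {a b : Fin n} (hab : a < b) (k : ℤ) :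
    poch q (qpow q τ * ((q : ℂ) ^ k
      * Complex.exp ((l b + ν b * Real.log q) - (l a + ν a * Real.log q)))) ≠ 0 := by
  have h := (hwd (Function.update ν b (ν b + k))).2 a b hab
  rw [Function.update_self, Function.update_of_ne hab.ne, mul_comm (Complex.exp (l b)),
    mul_comm (Complex.exp (l a)), ← exp_add_int_mul_log hq, ← exp_add_int_mul_log hq,
    ← Complex.exp_sub] at h
  convert h using 3
  rw [← exp_add_int_mul_log hq]
  push_cast
  ring_nf

lemma Apsi_comp_swap {q : ℝ} (hq0 : 0 < q) (hq1 : q < 1) (n : ℕ) (α τ a₁ b₁ : ℂ)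
    {l : Fin n → ℂ} (hwd : AWellDef q n τ b₁ l) {i j : Fin n} (hij : i < j) (hl : l i = l j)
    (ν : Fin n → ℤ) :
    Apsi q n α τ a₁ b₁ l (fun k => ν (Equiv.swap i j k)) = -Apsi q n α τ a₁ b₁ l ν := by
  have hl_swap : ∀ k, l (Equiv.swap i j k) = l k := fun k => by
    rw [Equiv.swap_apply_def]; split_ifs <;> simp_all
  have hL : (fun k => l k + ν (Equiv.swap i j k) * Real.log q)
      = fun k => (fun k => l k + ν k * Real.log q) (Equiv.swap i j k) :=
    funext fun k => by simp only [hl_swap]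
  rw [Apsi_eq_jacksonSummand hq0, Apsi_eq_jacksonSummand hq0, hL]
  refine jacksonSummand_comp_swap hq0 hq1 n α τ a₁ b₁ (L := fun k => l k + ν k * Real.log q) hij
    (ν j - ν i) ?_ fun a b hab k => hwd.poch_ne_zero hq0 ν hab k
  rw [hl]
  push_cast
  ring

lemma tsum_eq_zero_of_comp_eq_neg {β G : Type*} [AddCommGroup G] [TopologicalSpace G]
    [IsTopologicalAddGroup G] [T2Space G] [IsAddTorsionFree G] (e : β ≃ β) {f : β → G}
    (hf : ∀ b, f (e b) = -f b) : ∑' b, f b = 0 :=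
  self_eq_neg.mp <| calc
    ∑' b, f b = ∑' b, f (e b) := (e.tsum_eq f).symm
    _ = ∑' b, -f b := tsum_congr hf
    _ = -∑' b, f b := tsum_neg

theorem statement3_general (q : ℝ) (hq0 : 0 < q) (hq1 : q < 1) (n : ℕ)
    (α τ : ℂ)
    (a₁ b₁ : ℂ)
    (l : Fin n → ℂ)
    (hwd : AWellDef q n τ b₁ l)
    (i j : Fin n) (hij : i < j) (hbranch : l i = l j) :
    AInt q n α τ a₁ b₁ l = 0 := by
  rw [AInt, tsum_eq_zero_of_comp_eq_neg ((Equiv.swap i j).arrowCongr (Equiv.refl ℤ))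
    (Apsi_comp_swap hq0 hq1 n α τ a₁ b₁ hwd hij hbranch), mul_zero]

/-- Lemma 3.1: if `τ` is not a positive integer and two coordinates of the base point
(together with their branches) coincide, then the A-type Jackson integral vanishes. -/
theorem statement3 (q : ℝ) (hq0 : 0 < q) (hq1 : q < 1) (n : ℕ) (hn : 1 ≤ n)
    (α τ : ℂ) (hτ : ∀ m : ℕ, 0 < m → τ ≠ (m : ℂ))
    (a₁ b₁ : ℂ) (ha₁ : a₁ ≠ 0) (hb₁ : b₁ ≠ 0)
    (l : Fin n → ℂ)
    (hsum : Summable fun ν : Fin n → ℤ => Apsi q n α τ a₁ b₁ l ν)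
    (hwd : AWellDef q n τ b₁ l)
    (i j : Fin n) (hij : i < j) (hbranch : l i = l j) :
    AInt q n α τ a₁ b₁ l = 0 :=
  statement3_general q hq0 hq1 n α τ a₁ b₁ l hwd i j hij hbranch
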